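/- arXiv:1612.06554 — 4 statements merged into one kernel-verified Lean document; each statement's English description precedes it below -/
import Mathlib

section
/- Consider the scalar ODE dx/dt = x²(1−x) on ℝ_{≥0}. This system is permanent: for every initial condition x(0) > 0, liminf_{t→∞} x(t) ≥ 1/2 (indeed x(t) → 1). However, for every δ > 0 the perturbed system dx/dt = x²(1−x) − δx is not permanent: every solution with x(0) ∈ [0, x₋) tends to 0 as t → ∞, where x₋ is the smaller root of x(1−x) = δ (which exists when δ < 1/4). Hence permanence does not imply robust permanence. -/
open Filter Set

lemma ode_forward_const (g : ℝ → ℝ)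
    (hg : ∀ R, 0 < R → ∃ K, 0 ≤ K ∧ ∀ u v : ℝ, |u| ≤ R → |v| ≤ R → |g u - g v| ≤ K * |u - v|)
    (x : ℝ → ℝ) (hx : ∀ t, HasDerivAt x (g (x t)) t)
    (a : ℝ) (hga : g a = 0) (t₀ : ℝ) (hx0 : x t₀ = a) :
    ∀ t, t₀ ≤ t → x t = a := by
  intro t₁ ht₁
  have hc : Continuous x := by
    apply continuous_iff_continuousAt.2
    exact fun t => (hx t).continuousAt
  -- bound on compact time interval
  obtain ⟨C, hC⟩ := (isCompact_Icc (a := t₀) (b := t₁)).exists_bound_of_continuousOn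
    hc.continuousOn
  set R : ℝ := max C (|a| + 1) with hR
  have hR0 : 0 < R := lt_of_lt_of_le (by positivity) (le_max_right _ _)
  have haR : |a| ≤ R := le_trans (by linarith) (le_max_right _ _)
  have hxR : ∀ s ∈ Icc t₀ t₁, |x s| ≤ R := fun s hs =>
    le_trans (by simpa using hC s hs) (le_max_left _ _)
  obtain ⟨K, hK0, hK⟩ := hg R hR0
  -- energy function
  set E : ℝ → ℝ := fun t => (x t - a) ^ 2 * Real.exp ((-(2 * K)) * t) with hE
  have hED : ∀ t, HasDerivAt E
      ((2 * (x t - a) * g (x t)) * Real.exp ((-(2 * K)) * t)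
        + (x t - a) ^ 2 * (Real.exp ((-(2 * K)) * t) * (-(2 * K)))) t := by
    intro t
    have h1 : HasDerivAt (fun t => (x t - a) ^ 2) (2 * (x t - a) * g (x t)) t := by
      have := ((hx t).sub_const a).fun_pow 2
      simpa [mul_comm, mul_assoc, mul_left_comm] using this
    have h2 : HasDerivAt (fun t : ℝ => Real.exp ((-(2 * K)) * t))
        (Real.exp ((-(2 * K)) * t) * (-(2 * K))) t := by
      have hlin : HasDerivAt (fun t : ℝ => (-(2 * K)) * t) (-(2 * K)) t := by
        simpa using (hasDerivAt_id t).const_mul (-(2 * K))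
      exact (Real.hasDerivAt_exp _).comp t hlin
    exact h1.mul h2
  have hEanti : AntitoneOn E (Icc t₀ t₁) := by
    apply antitoneOn_of_deriv_nonpos (convex_Icc _ _)
    · exact fun t _ => ((hED t).continuousAt).continuousWithinAt
    · exact fun t _ => ((hED t).differentiableAt).differentiableWithinAt
    · intro t ht
      rw [interior_Icc] at ht
      rw [(hED t).deriv]
      have hmem : t ∈ Icc t₀ t₁ := ⟨ht.1.le, ht.2.le⟩
      have hb : |g (x t)| ≤ K * |x t - a| := by
        have := hK (x t) a (hxR t hmem) haR
        simpa [hga] using this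
      have key : 2 * (x t - a) * g (x t) ≤ 2 * K * (x t - a) ^ 2 := by
        have h1 : (x t - a) * g (x t) ≤ |x t - a| * |g (x t)| := by
          calc (x t - a) * g (x t) ≤ |(x t - a) * g (x t)| := le_abs_self _
            _ = |x t - a| * |g (x t)| := abs_mul _ _
        have h2 : |x t - a| * |g (x t)| ≤ |x t - a| * (K * |x t - a|) :=
          mul_le_mul_of_nonneg_left hb (abs_nonneg _)
        have h3 : |x t - a| * (K * |x t - a|) = K * (x t - a) ^ 2 := by
          have := abs_mul_abs_self (x t - a)
          nlinarith [abs_nonneg (x t - a)]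
        nlinarith
      have hexp : 0 < Real.exp ((-(2 * K)) * t) := Real.exp_pos _
      nlinarith [key, hexp]
  have hE0 : E t₀ = 0 := by simp [hE, hx0]
  have hle : E t₁ ≤ 0 := by
    have := hEanti (left_mem_Icc.2 ht₁) (right_mem_Icc.2 ht₁) ht₁
    linarith [hE0 ▸ this]
  have hge : 0 ≤ E t₁ := by positivity
  have hEt1 : E t₁ = 0 := le_antisymm hle hge
  have : (x t₁ - a) ^ 2 = 0 := by
    have hexp : Real.exp ((-(2 * K)) * t₁) ≠ 0 := (Real.exp_pos _).ne'
    exact (mul_eq_zero.1 hEt1).resolve_right hexp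
  have := pow_eq_zero_iff (n := 2) (by norm_num) |>.1 this
  linarith [sub_eq_zero.1 this]

lemma ode_const (g : ℝ → ℝ)
    (hg : ∀ R, 0 < R → ∃ K, 0 ≤ K ∧ ∀ u v : ℝ, |u| ≤ R → |v| ≤ R → |g u - g v| ≤ K * |u - v|)
    (x : ℝ → ℝ) (hx : ∀ t, HasDerivAt x (g (x t)) t)
    (a : ℝ) (hga : g a = 0) (t₀ : ℝ) (hx0 : x t₀ = a) :
    ∀ t, x t = a := by
  intro t
  rcases le_total t₀ t with h | h
  · exact ode_forward_const g hg x hx a hga t₀ hx0 t h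
  · set y : ℝ → ℝ := fun s => x (2 * t₀ - s) with hy
    have hyD : ∀ s, HasDerivAt y (-(g (y s))) s := by
      intro s
      have h1 : HasDerivAt (fun s : ℝ => 2 * t₀ - s) (-1) s := by
        simpa using (hasDerivAt_id s).const_sub (2 * t₀)
      have := (hx (2 * t₀ - s)).comp s h1
      simpa [hy, mul_comm, Function.comp_def] using this
    have hg' : ∀ R, 0 < R → ∃ K, 0 ≤ K ∧ ∀ u v : ℝ, |u| ≤ R → |v| ≤ R →
        |(-(g u)) - (-(g v))| ≤ K * |u - v| := by
      intro R hR
      obtain ⟨K, hK0, hK⟩ := hg R hR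
      refine ⟨K, hK0, fun u v hu hv => ?_⟩
      have : -(g u) - -(g v) = -(g u - g v) := by ring
      rw [this, abs_neg]
      exact hK u v hu hv
    have hy0 : y t₀ = a := by
      have : 2 * t₀ - t₀ = t₀ := by ring
      simp [hy, this, hx0]
    have := ode_forward_const (fun u => -(g u)) hg' y hyD a (by simp [hga]) t₀ hy0
      (2 * t₀ - t) (by linarith)
    have harg : 2 * t₀ - (2 * t₀ - t) = t := by ring
    simpa [hy, harg] using this

lemma stay_gt (x : ℝ → ℝ) (hc : Continuous x) (a : ℝ)
    (hne : ∀ t, x t ≠ a) (h0 : a < x 0) : ∀ t, a < x t := by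
  intro t
  by_contra h
  push_neg at h
  have hlt : x t < a := lt_of_le_of_ne h (hne t)
  rcases le_total t 0 with h' | h'
  · obtain ⟨s, _, hs⟩ := intermediate_value_Icc h' hc.continuousOn
      (show a ∈ Icc (x t) (x 0) from ⟨hlt.le, h0.le⟩)
    exact hne s hs
  · obtain ⟨s, _, hs⟩ := intermediate_value_Icc' h' hc.continuousOn
      (show a ∈ Icc (x t) (x 0) from ⟨hlt.le, h0.le⟩)
    exact hne s hs

lemma stay_lt (x : ℝ → ℝ) (hc : Continuous x) (a : ℝ)
    (hne : ∀ t, x t ≠ a) (h0 : x 0 < a) : ∀ t, x t < a := by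
  have := stay_gt (fun t => -(x t)) hc.neg (-a)
    (fun t h => hne t (neg_injective h)) (by simpa using h0)
  intro t
  have h2 : -a < -(x t) := this t
  linarith

lemma tendsto_decr (g : ℝ → ℝ) (hgc : Continuous g) (x : ℝ → ℝ)
    (hx : ∀ t, HasDerivAt x (g (x t)) t) (a b : ℝ)
    (hmem : ∀ t, 0 ≤ t → x t ∈ Ioc a b)
    (hneg : ∀ u, a < u → u ≤ b → g u < 0) :
    Tendsto x atTop (nhds a) := by
  have hc : Continuous x := continuous_iff_continuousAt.2 fun t => (hx t).continuousAt
  set L := sInf (x '' Ici 0) with hL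
  have hne : (x '' Ici 0).Nonempty := ⟨x 0, 0, mem_Ici.2 le_rfl, rfl⟩
  have hbdd : BddBelow (x '' Ici 0) := by
    refine ⟨a, ?_⟩
    rintro v ⟨t, ht, rfl⟩
    exact (hmem t ht).1.le
  have hLa : a ≤ L := le_csInf hne (by rintro v ⟨t, ht, rfl⟩; exact (hmem t ht).1.le)
  have hLx : ∀ t, 0 ≤ t → L ≤ x t := fun t ht => csInf_le hbdd ⟨t, ht, rfl⟩
  have hLb : L ≤ b := (hLx 0 le_rfl).trans (hmem 0 le_rfl).2
  have hanti : AntitoneOn x (Ici 0) := by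
    apply antitoneOn_of_deriv_nonpos (convex_Ici 0) hc.continuousOn
      (fun t _ => (hx t).differentiableAt.differentiableWithinAt)
    intro t ht
    rw [interior_Ici] at ht
    rw [(hx t).deriv]
    exact (hneg _ (hmem t ht.le).1 (hmem t ht.le).2).le
  have hT : Tendsto x atTop (nhds L) := by
    refine tendsto_order.2 ⟨fun c hcL => ?_, fun c hLc => ?_⟩
    · exact eventually_atTop.2 ⟨0, fun t ht => hcL.trans_le (hLx t ht)⟩
    · obtain ⟨v, hv, hvc⟩ := exists_lt_of_csInf_lt hne hLc
      obtain ⟨t₀, ht₀, rfl⟩ := hv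
      refine eventually_atTop.2 ⟨t₀, fun t ht => lt_of_le_of_lt ?_ hvc⟩
      exact hanti ht₀ (le_trans ht₀ ht) ht
  rcases eq_or_lt_of_le hLa with h | h
  · exact h ▸ hT
  · exfalso
    obtain ⟨u₀, hu₀, hmax⟩ := (isCompact_Icc (a := L) (b := b)).exists_isMaxOn
      ⟨L, left_mem_Icc.2 hLb⟩ hgc.continuousOn
    set c := -(g u₀) with hcdef
    have hc0 : 0 < c := neg_pos.2 (hneg u₀ (lt_of_lt_of_le h hu₀.1) hu₀.2)
    have hmono : AntitoneOn (fun t => x t + c * t) (Ici 0) := by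
      apply antitoneOn_of_deriv_nonpos (convex_Ici 0)
      · exact (hc.add (continuous_const.mul continuous_id)).continuousOn
      · intro t _
        exact (((hx t).add (by simpa using (hasDerivAt_id t).const_mul c)).differentiableAt).differentiableWithinAt
      · intro t ht
        rw [interior_Ici] at ht
        have hder : HasDerivAt (fun t => x t + c * t) (g (x t) + c) t :=
          (hx t).add (by simpa using (hasDerivAt_id t).const_mul c)
        rw [hder.deriv]
        have hmemt : x t ∈ Icc L b := ⟨hLx t ht.le, (hmem t ht.le).2⟩
        have h5 : g (x t) ≤ g u₀ := hmax hmemt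
        simp only [hcdef]
        linarith
    have hT0 : 0 ≤ (b - a) / c + 1 := by
      have : 0 ≤ (b - a) / c := div_nonneg (by linarith [(hmem 0 le_rfl).1, (hmem 0 le_rfl).2]) hc0.le
      linarith
    set T := (b - a) / c + 1 with hT'
    have h1 : x T + c * T ≤ x 0 + c * 0 := hmono (self_mem_Ici) hT0 hT0
    have h2 : c * T = (b - a) + c := by rw [hT']; field_simp
    have h3 : x 0 ≤ b := (hmem 0 le_rfl).2
    have h4 : a < x T := (hmem T hT0).1
    linarith

lemma tendsto_incr (g : ℝ → ℝ) (hgc : Continuous g) (x : ℝ → ℝ)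
    (hx : ∀ t, HasDerivAt x (g (x t)) t) (a b : ℝ)
    (hmem : ∀ t, 0 ≤ t → x t ∈ Ico a b)
    (hpos : ∀ u, a ≤ u → u < b → 0 < g u) :
    Tendsto x atTop (nhds b) := by
  have key := tendsto_decr (fun u => -(g (-u))) (by continuity)
    (fun t => -(x t)) (fun t => by simpa using (hx t).fun_neg) (-b) (-a)
    (fun t ht => ⟨by simpa using (hmem t ht).2, by simpa using (hmem t ht).1⟩)
    (fun u hu1 hu2 => by
      have := hpos (-u) (by linarith) (by linarith)
      show -(g (-u)) < 0
      linarith)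
  have := key.neg
  simpa using this

lemma cubic_lip (δ : ℝ) (hδ : 0 ≤ δ) :
    ∀ R, 0 < R → ∃ K, 0 ≤ K ∧ ∀ u v : ℝ, |u| ≤ R → |v| ≤ R →
      |(u^2*(1-u) - δ*u) - (v^2*(1-v) - δ*v)| ≤ K * |u - v| := by
  intro R hR
  refine ⟨2*R + 3*R^2 + δ, by positivity, fun u v hu hv => ?_⟩
  have heq : (u^2*(1-u) - δ*u) - (v^2*(1-v) - δ*v)
      = (u - v) * ((u + v) - (u^2 + u*v + v^2) - δ) := by ring
  rw [heq, abs_mul, mul_comm]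
  apply mul_le_mul_of_nonneg_right _ (abs_nonneg _)
  rw [abs_le]
  obtain ⟨hu1, hu2⟩ := abs_le.1 hu
  obtain ⟨hv1, hv2⟩ := abs_le.1 hv
  constructor <;> nlinarith [sq_nonneg (u + v), sq_nonneg (u - v), sq_nonneg u, sq_nonneg v]

/-- `dx/dt = x²(1−x)` is permanent (with β = 1/2; indeed solutions with x(0) > 0 tend to 1),
but for every `δ ∈ (0, 1/4)` the perturbed system `dx/dt = x²(1−x) − δx` is not permanent:
all solutions starting in `[0, x₋)` (with `x₋ = (1 − √(1−4δ))/2` the smaller root of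
`x(1−x) = δ`) tend to 0.  Hence permanence does not imply robust permanence. -/
theorem permanence_not_robust :
    ((∀ x : ℝ → ℝ, (∀ t, HasDerivAt x ((x t)^2 * (1 - x t)) t) → 0 < x 0 →
        (1/2 : ℝ) ≤ Filter.liminf x atTop ∧ Tendsto x atTop (nhds 1)) ∧
     (∀ δ : ℝ, 0 < δ → δ < 1/4 →
        ∀ x : ℝ → ℝ, (∀ t, HasDerivAt x ((x t)^2 * (1 - x t) - δ * x t) t) →
          x 0 ∈ Set.Ico (0:ℝ) ((1 - Real.sqrt (1 - 4*δ))/2) →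
          Tendsto x atTop (nhds 0))) := by
  constructor
  · -- Part 1: unperturbed system is permanent
    intro x hx hx0
    set g : ℝ → ℝ := fun u => u^2*(1-u) - 0*u with hgdef
    have hx' : ∀ t, HasDerivAt x (g (x t)) t := fun t => by
      simpa [hgdef] using hx t
    have hgl := cubic_lip 0 le_rfl
    have hgc : Continuous g := by fun_prop
    have hc : Continuous x := continuous_iff_continuousAt.2 fun t => (hx' t).continuousAt
    have hg0 : g 0 = 0 := by norm_num [hgdef]
    have hg1 : g 1 = 0 := by norm_num [hgdef]
    have hT : Tendsto x atTop (nhds 1) := by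
      rcases lt_trichotomy (x 0) 1 with hlt | heq | hgt
      · -- 0 < x 0 < 1 : solution increases to 1
        have hne0 : ∀ t, x t ≠ 0 := by
          intro t h
          have := ode_const g hgl x hx' 0 hg0 t h 0
          linarith
        have hne1 : ∀ t, x t ≠ 1 := by
          intro t h
          have := ode_const g hgl x hx' 1 hg1 t h 0
          linarith
        have hpos : ∀ t, 0 < x t := stay_gt x hc 0 hne0 hx0
        have hlt1 : ∀ t, x t < 1 := stay_lt x hc 1 hne1 hlt
        have hmono : StrictMono x := by
          apply strictMono_of_deriv_pos
          intro t
          rw [(hx' t).deriv]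
          have h1 := hpos t
          have h2 := hlt1 t
          simp only [hgdef]
          nlinarith [mul_pos (mul_pos h1 h1) (sub_pos.2 h2)]
        apply tendsto_incr g hgc x hx' (x 0) 1
        · exact fun t ht => ⟨hmono.monotone ht, hlt1 t⟩
        · intro u hu1 hu2
          simp only [hgdef]
          have hu0 : 0 < u := lt_of_lt_of_le hx0 hu1
          nlinarith [mul_pos (mul_pos hu0 hu0) (sub_pos.2 hu2)]
      · -- x 0 = 1 : constant solution
        have : ∀ t, x t = 1 := ode_const g hgl x hx' 1 hg1 0 heq
        have hxx : x = fun _ => 1 := funext this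
        rw [hxx]
        exact tendsto_const_nhds
      · -- x 0 > 1 : solution decreases to 1
        have hne1 : ∀ t, x t ≠ 1 := by
          intro t h
          have := ode_const g hgl x hx' 1 hg1 t h 0
          linarith
        have hgt1 : ∀ t, 1 < x t := stay_gt x hc 1 hne1 hgt
        have hanti : StrictAnti x := by
          apply strictAnti_of_deriv_neg
          intro t
          rw [(hx' t).deriv]
          have h1 := hgt1 t
          simp only [hgdef]
          nlinarith [mul_pos (mul_pos (by linarith : (0:ℝ) < x t) (by linarith : (0:ℝ) < x t)) (sub_pos.2 h1)]
        apply tendsto_decr g hgc x hx' 1 (x 0)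
        · exact fun t ht => ⟨hgt1 t, hanti.antitone ht⟩
        · intro u hu1 hu2
          simp only [hgdef]
          nlinarith [mul_pos (mul_pos (by linarith : (0:ℝ) < u) (by linarith : (0:ℝ) < u)) (sub_pos.2 hu1)]
    refine ⟨?_, hT⟩
    have := hT.liminf_eq
    rw [this]
    norm_num
  · -- Part 2: perturbed system is not permanent
    intro δ hδ0 hδ4 x hx hx0mem
    set s : ℝ := Real.sqrt (1 - 4*δ) with hsdef
    have hs2 : s^2 = 1 - 4*δ := Real.sq_sqrt (by linarith)
    have hs0 : 0 < s := Real.sqrt_pos.2 (by linarith)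
    have hs1 : s < 1 := by nlinarith
    set xm : ℝ := (1 - s)/2 with hxmdef
    have hxm0 : 0 < xm := by rw [hxmdef]; linarith
    have hxmh : xm < 1/2 := by rw [hxmdef]; linarith
    have heqm : xm * (1 - xm) = δ := by
      rw [hxmdef]
      linear_combination (-(1:ℝ)/4) * hs2
    set g : ℝ → ℝ := fun u => u^2*(1-u) - δ*u with hgdef
    have hx' : ∀ t, HasDerivAt x (g (x t)) t := fun t => hx t
    have hgl := cubic_lip δ hδ0.le
    have hgc : Continuous g := by fun_prop
    have hc : Continuous x := continuous_iff_continuousAt.2 fun t => (hx' t).continuousAt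
    have hg0 : g 0 = 0 := by norm_num [hgdef]
    have hgxm : g xm = 0 := by
      simp only [hgdef]
      linear_combination xm * heqm
    obtain ⟨hx0ge, hx0lt⟩ := hx0mem
    -- sign of g on (0, xm)
    have hsign : ∀ u, 0 < u → u < xm → g u < 0 := by
      intro u hu hum
      have key : u * (1 - u) < δ := by nlinarith
      simp only [hgdef]
      nlinarith [mul_pos hu (sub_pos.2 key)]
    rcases eq_or_lt_of_le hx0ge with h0 | h0
    · -- x 0 = 0 : constant solution
      have : ∀ t, x t = 0 := ode_const g hgl x hx' 0 hg0 0 h0.symm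
      have hxx : x = fun _ => 0 := funext this
      rw [hxx]
      exact tendsto_const_nhds
    · -- 0 < x 0 < xm
      have hne0 : ∀ t, x t ≠ 0 := by
        intro t h
        have := ode_const g hgl x hx' 0 hg0 t h 0
        linarith
      have hnem : ∀ t, x t ≠ xm := by
        intro t h
        have := ode_const g hgl x hx' xm hgxm t h 0
        linarith
      have hpos : ∀ t, 0 < x t := stay_gt x hc 0 hne0 h0
      have hltm : ∀ t, x t < xm := stay_lt x hc xm hnem hx0lt
      have hanti : StrictAnti x := by
        apply strictAnti_of_deriv_neg
        intro t
        rw [(hx' t).deriv]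
        exact hsign _ (hpos t) (hltm t)
      apply tendsto_decr g hgc x hx' 0 (x 0)
      · exact fun t ht => ⟨hpos t, hanti.antitone ht⟩
      · intro u hu1 hu2
        exact hsign u hu1 (lt_of_le_of_lt hu2 (hltm 0))
end

section
/- Let A be the 3×3 matrix with entries a_{ij} = a + B_{ij} where B = [[0, β, −α], [−α, 0, β], [β, −α, 0]], with a, α, β > 0. Fix x̂ > 0. There exist p₁, p₂, p₃ > 0 satisfying the three inequalities p₂·α·x̂ − p₃·β·x̂ > 0, −p₁·β·x̂ + p₃·α·x̂ > 0, p₁·α·x̂ − p₂·β·x̂ > 0 if and only if α > β. Moreover, there exist p₁, p₂, p₃ > 0 satisfying the reversed inequalities (all three expressions < 0) if and only if β > α. -/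
lemma rps_key (α β : ℝ) (p₁ p₂ p₃ : ℝ) (h1 : 0 < p₁) (h2 : 0 < p₂) (h3 : 0 < p₃)
    (a1 : p₃ * β < p₂ * α) (a2 : p₁ * β < p₃ * α) (a3 : p₂ * β < p₁ * α) :
    β < α := by
  by_contra h
  push_neg at h
  nlinarith [mul_pos h1 h2, mul_pos h2 h3, mul_pos h1 h3,
    mul_lt_mul_of_pos_left a1 h1, mul_lt_mul_of_pos_left a2 h2,
    mul_lt_mul_of_pos_left a3 h3, mul_pos (mul_pos h1 h2) h3]

/-- The weighted invasion-rate inequalities at the single-species equilibria of the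
rock–paper–scissors system admit a positive solution `(p₁,p₂,p₃)` iff `α > β`, and
the reversed inequalities admit a positive solution iff `β > α`. -/
theorem rps_weights_iff
    (a α β xhat : ℝ) (ha : 0 < a) (hα : 0 < α) (hβ : 0 < β) (hαa : α < a)
    (hx : 0 < xhat) :
    ((∃ p₁ p₂ p₃ : ℝ, 0 < p₁ ∧ 0 < p₂ ∧ 0 < p₃ ∧
        p₂ * α * xhat - p₃ * β * xhat > 0 ∧
        -(p₁ * β * xhat) + p₃ * α * xhat > 0 ∧
        p₁ * α * xhat - p₂ * β * xhat > 0) ↔ α > β) ∧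
    ((∃ p₁ p₂ p₃ : ℝ, 0 < p₁ ∧ 0 < p₂ ∧ 0 < p₃ ∧
        p₂ * α * xhat - p₃ * β * xhat < 0 ∧
        -(p₁ * β * xhat) + p₃ * α * xhat < 0 ∧
        p₁ * α * xhat - p₂ * β * xhat < 0) ↔ β > α) := by
  constructor
  · constructor
    · rintro ⟨p₁, p₂, p₃, h1, h2, h3, b1, b2, b3⟩
      have c1 : p₃ * β < p₂ * α := by nlinarith
      have c2 : p₁ * β < p₃ * α := by nlinarith
      have c3 : p₂ * β < p₁ * α := by nlinarith
      exact rps_key α β p₁ p₂ p₃ h1 h2 h3 c1 c2 c3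
    · intro h
      exact ⟨1, 1, 1, one_pos, one_pos, one_pos, by nlinarith, by nlinarith, by nlinarith⟩
  · constructor
    · rintro ⟨p₁, p₂, p₃, h1, h2, h3, b1, b2, b3⟩
      have c1 : p₂ * α < p₃ * β := by nlinarith
      have c2 : p₃ * α < p₁ * β := by nlinarith
      have c3 : p₁ * α < p₂ * β := by nlinarith
      exact rps_key β α p₁ p₃ p₂ h1 h3 h2 c1 c3 c2
    · intro h
      exact ⟨1, 1, 1, one_pos, one_pos, one_pos, by nlinarith, by nlinarith, by nlinarith⟩
end

section
/- Consider the frequency dynamics dy/dt = y(1−y)(b + d_m − d_f − 2by) on [0,1], where b > 0 and b > d_m + d_f with d_m, d_f ≥ 0. The point ŷ = 1/2 + (d_m − d_f)/(2b) lies in (0,1), is an equilibrium, and is globally asymptotically stable on (0,1): every solution with y(0) ∈ (0,1) converges to ŷ as t → ∞. -/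
open Filter Set Topology
/-- If `y' = F(y)` and `F c < 0`, the region `{y ≤ c}` is forward invariant. -/
lemma trap_above (F y : ℝ → ℝ) (hy : ∀ t, HasDerivAt y (F (y t)) t)
    {c : ℝ} (hFc : F c < 0) (h0 : y 0 ≤ c) : ∀ t, 0 ≤ t → y t ≤ c := by
  intro t ht
  by_contra hlt
  push_neg at hlt
  have hdiff : Differentiable ℝ y := fun u => (hy u).differentiableAt
  have hcont : Continuous y := hdiff.continuous
  set S : Set ℝ := Set.Icc 0 t ∩ {u | y u ≤ c} with hSdef
  have hne : (0:ℝ) ∈ S := ⟨⟨le_refl 0, ht⟩, h0⟩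
  have hbdd : BddAbove S := ⟨t, fun u hu => hu.1.2⟩
  have hclosed : IsClosed S := isClosed_Icc.inter (isClosed_le hcont continuous_const)
  set s := sSup S with hs
  have hsS : s ∈ S := hclosed.csSup_mem ⟨0, hne⟩ hbdd
  have hst : s < t := by
    rcases lt_or_eq_of_le hsS.1.2 with h | h
    · exact h
    · exact absurd (h ▸ hsS.2) (not_le.2 hlt)
  have hgt : ∀ u, s < u → u ≤ t → c < y u := by
    intro u hsu hut
    by_contra h
    push_neg at h
    have huS : u ∈ S := ⟨⟨le_trans hsS.1.1 hsu.le, hut⟩, h⟩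
    exact absurd (le_csSup hbdd huS) (not_le.2 hsu)
  have hys : y s = c := by
    refine le_antisymm hsS.2 ?_
    have h1 : Tendsto y (𝓝[>] s) (𝓝 (y s)) :=
      (hcont.continuousAt).continuousWithinAt
    refine ge_of_tendsto h1 ?_
    filter_upwards [Ioc_mem_nhdsGT_of_mem ⟨le_refl s, hst⟩] with u hu
    exact (hgt u hu.1 hu.2).le
  have hd : HasDerivAt y (F c) s := hys ▸ hy s
  have hslope := hasDerivAt_iff_tendsto_slope.1 hd
  have hslope' : Tendsto (slope y s) (𝓝[>] s) (𝓝 (F c)) :=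
    hslope.mono_left (nhdsWithin_mono _ (fun u hu => ne_of_gt hu))
  have hev : {u | slope y s u < 0} ∈ 𝓝[>] s := hslope' (Iio_mem_nhds hFc)
  obtain ⟨u, hu1, hu2⟩ :=
    (Filter.Eventually.and hev (Ioc_mem_nhdsGT_of_mem ⟨le_refl s, hst⟩)).exists
  have hus : (0:ℝ) < u - s := sub_pos.2 hu2.1
  have hsl : slope y s u = (y u - y s) / (u - s) := slope_def_field y s u
  rw [hsl] at hu1
  have hlt2 : y u - y s < 0 := by
    by_contra h
    push_neg at h
    exact absurd hu1 (not_lt.2 (div_nonneg h hus.le))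
  have := hgt u hu2.1 hu2.2
  rw [hys] at hlt2
  linarith

lemma trap_below (F y : ℝ → ℝ) (hy : ∀ t, HasDerivAt y (F (y t)) t)
    {a : ℝ} (hFa : 0 < F a) (h0 : a ≤ y 0) : ∀ t, 0 ≤ t → a ≤ y t := by
  have key := trap_above (fun x => -F (-x)) (fun t => -(y t))
    (fun t => by have := (hy t).neg; simp only [neg_neg]; exact this) (c := -a) (by simpa using hFa) (by simpa using h0)
  intro t ht
  have := key t ht
  simpa using this

/-- Global asymptotic stability of the sex-ratio equilibrium
`ŷ = 1/2 + (d_m − d_f)/(2b)` for `dy/dt = y(1−y)(b + d_m − d_f − 2by)` on `(0,1)`. -/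
theorem sex_ratio_GAS
    (b dm df : ℝ) (hb : 0 < b) (hdm : 0 ≤ dm) (hdf : 0 ≤ df) (hbd : dm + df < b) :
    (1/2 + (dm - df)/(2*b)) ∈ Set.Ioo (0:ℝ) 1 ∧
    (1/2 + (dm - df)/(2*b)) * (1 - (1/2 + (dm - df)/(2*b))) *
      (b + dm - df - 2*b*(1/2 + (dm - df)/(2*b))) = 0 ∧
    (∀ y : ℝ → ℝ,
      (∀ t, HasDerivAt y (y t * (1 - y t) * (b + dm - df - 2*b*y t)) t) →
      y 0 ∈ Set.Ioo (0:ℝ) 1 →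
      Tendsto y atTop (nhds (1/2 + (dm - df)/(2*b)))) := by
  have hb2 : (0:ℝ) < 2*b := by linarith
  obtain ⟨p, hpdef, heq, hp0, hp1⟩ :
      ∃ p : ℝ, p = 1/2 + (dm - df)/(2*b) ∧ b + dm - df = 2*b*p ∧ 0 < p ∧ p < 1 := by
    refine ⟨1/2 + (dm - df)/(2*b), rfl, ?_, ?_, ?_⟩
    · field_simp
      ring
    · have h1 : -b < dm - df := by linarith
      have h2 : -1/2 < (dm - df)/(2*b) := by
        rw [div_lt_div_iff₀ (by norm_num) hb2] at *
        nlinarith [h1]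
      linarith
    · have h1 : dm - df < b := by linarith
      have h2 : (dm - df)/(2*b) < 1/2 := by
        rw [div_lt_div_iff₀ hb2 (by norm_num)]
        nlinarith [h1]
      linarith
  rw [← hpdef]
  refine ⟨⟨hp0, hp1⟩, ?_, ?_⟩
  · have : b + dm - df - 2*b*p = 0 := by linarith
    rw [this, mul_zero]
  · intro y hy hy0
    obtain ⟨hy0a, hy0b⟩ := hy0
    obtain ⟨a, ha0, hap, hay⟩ : ∃ a : ℝ, 0 < a ∧ a < p ∧ a ≤ y 0 := by
      refine ⟨min (y 0) p / 2, ?_, ?_, ?_⟩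
      · have := lt_min hy0a hp0; linarith
      · have := min_le_right (y 0) p; linarith
      · have := min_le_left (y 0) p; linarith
    obtain ⟨c, hc1, hpc, hyc⟩ : ∃ c : ℝ, c < 1 ∧ p < c ∧ y 0 ≤ c := by
      refine ⟨(max (y 0) p + 1) / 2, ?_, ?_, ?_⟩
      · have := max_lt hy0b hp1; linarith
      · have := le_max_right (y 0) p; linarith
      · have := le_max_left (y 0) p; linarith
    have ha1 : a < 1 := lt_trans hap hp1
    have hc0 : 0 < c := lt_trans hp0 hpc
    have hFa : 0 < a * (1 - a) * (b + dm - df - 2*b*a) := by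
      have h2 : b + dm - df - 2*b*a = 2*b*(p - a) := by linarith
      rw [h2]
      have h3 : 0 < p - a := by linarith
      have h4 : 0 < 1 - a := by linarith
      positivity
    have hFc : c * (1 - c) * (b + dm - df - 2*b*c) < 0 := by
      have h2 : b + dm - df - 2*b*c = 2*b*(p - c) := by linarith
      rw [h2]
      have h3 : 2*b*(p - c) < 0 := by nlinarith
      have h4 : 0 < c * (1 - c) := by nlinarith
      nlinarith
    have hup : ∀ t, 0 ≤ t → y t ≤ c :=
      trap_above (fun x => x * (1 - x) * (b + dm - df - 2*b*x)) y hy hFc hyc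
    have hlo : ∀ t, 0 ≤ t → a ≤ y t :=
      trap_below (fun x => x * (1 - x) * (b + dm - df - 2*b*x)) y hy hFa hay
    obtain ⟨k, hkpos, hkle⟩ :
        ∃ k : ℝ, 0 < k ∧ ∀ x, a ≤ x → x ≤ c → k ≤ 4*b*(x*(1-x)) := by
      refine ⟨4*b*(a*(1-c)), ?_, ?_⟩
      · have h3 : 0 < 1 - c := by linarith
        positivity
      · intro x hx1 hx2
        have h3 : 0 ≤ 1 - c := by linarith
        have h4 : 1 - c ≤ 1 - x := by linarith
        have h5 : 0 ≤ x := le_trans ha0.le hx1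
        nlinarith [mul_le_mul hx1 h4 h3 h5]
    set g : ℝ → ℝ := fun t => Real.exp (k*t) * (y t - p)^2 with hg
    have hgd : ∀ t, HasDerivAt g
        (k * Real.exp (k*t) * (y t - p)^2 +
          Real.exp (k*t) * (2*(y t - p) * (y t * (1 - y t) * (b + dm - df - 2*b*y t)))) t := by
      intro t
      have e1 : HasDerivAt (fun s : ℝ => Real.exp (k*s)) (k * Real.exp (k*t)) t := by
        exact ((Real.hasDerivAt_exp (k*t)).comp t ((hasDerivAt_id t).const_mul k)).congr_deriv (by simp [mul_comm])
      have e2 : HasDerivAt (fun t => (y t - p)^2)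
          (2*(y t - p) * (y t * (1 - y t) * (b + dm - df - 2*b*y t))) t := by
        have := ((hy t).sub_const p).pow 2
        exact this.congr_deriv (by norm_num)
      exact e1.mul e2
    have hgdiff : Differentiable ℝ g := fun t => (hgd t).differentiableAt
    have hderiv_nonpos : ∀ t, 0 ≤ t → deriv g t ≤ 0 := by
      intro t ht
      rw [(hgd t).deriv]
      have h1 : a ≤ y t := hlo t ht
      have h2 : y t ≤ c := hup t ht
      have hE : 0 < Real.exp (k*t) := Real.exp_pos _
      have hsub : b + dm - df - 2*b*(y t) = 2*b*(p - y t) := by linarith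
      have factored : k * Real.exp (k*t) * (y t - p)^2 +
          Real.exp (k*t) * (2*(y t - p) * (y t * (1 - y t) * (b + dm - df - 2*b*y t)))
          = Real.exp (k*t) * ((y t - p)^2 * (k - 4*b*(y t * (1 - y t)))) := by
        rw [hsub]
        ring
      rw [factored]
      have key : k - 4*b*(y t * (1 - y t)) ≤ 0 :=
        sub_nonpos.2 (hkle (y t) h1 h2)
      exact mul_nonpos_of_nonneg_of_nonpos hE.le
        (mul_nonpos_of_nonneg_of_nonpos (sq_nonneg _) key)
    have hanti : AntitoneOn g (Set.Ici 0) := by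
      apply antitoneOn_of_deriv_nonpos (convex_Ici 0) hgdiff.continuous.continuousOn
        hgdiff.differentiableOn
      intro t ht
      rw [interior_Ici] at ht
      exact hderiv_nonpos t (le_of_lt ht)
    have hbound : ∀ t, 0 ≤ t → (y t - p)^2 ≤ Real.exp (-(k*t)) * g 0 := by
      intro t ht
      have h1 : g t ≤ g 0 := hanti (le_refl (0:ℝ)) ht ht
      have h2 : Real.exp (k*t) * (y t - p)^2 ≤ g 0 := h1
      have h3 : (y t - p)^2 = Real.exp (-(k*t)) * (Real.exp (k*t) * (y t - p)^2) := by
        rw [← mul_assoc, ← Real.exp_add]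
        simp
      rw [h3]
      exact mul_le_mul_of_nonneg_left h2 (Real.exp_pos _).le
    have hsq : Tendsto (fun t => (y t - p)^2) atTop (nhds 0) := by
      have hub : Tendsto (fun t => Real.exp (-(k*t)) * g 0) atTop (nhds 0) := by
        have h1 : Tendsto (fun t : ℝ => -(k*t)) atTop atBot := by
          have h0 : Tendsto (fun t : ℝ => k*t) atTop atTop := by
            simpa using (tendsto_id (α := ℝ)).const_mul_atTop hkpos
          exact tendsto_neg_atTop_atBot.comp h0
        have h2 : Tendsto (fun t : ℝ => Real.exp (-(k*t))) atTop (nhds 0) :=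
          Real.tendsto_exp_atBot.comp h1
        simpa using h2.mul_const (g 0)
      refine tendsto_of_tendsto_of_tendsto_of_le_of_le' tendsto_const_nhds hub ?_ ?_
      · exact Eventually.of_forall fun t => sq_nonneg _
      · filter_upwards [eventually_ge_atTop (0:ℝ)] with t ht
        exact hbound t ht
    have habs : Tendsto (fun t => |y t - p|) atTop (nhds 0) := by
      have := (Real.continuous_sqrt.tendsto 0).comp hsq
      simpa [Function.comp_def, Real.sqrt_sq_eq_abs] using this
    rw [tendsto_iff_dist_tendsto_zero]
    simpa [Real.dist_eq] using habs
end

section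
/- Let Φ be a continuous flow on a metric space S with closed invariant subset S₀, and suppose z ∈ S has a forward orbit with compact closure. If V : S \ S₀ → ℝ is continuous and differentiable along orbits, and there exists β > 0 such that limsup_{s→∞} (1/s)∫_0^s (d/dt V)(Φ_t(w)) dt > β for every w ∈ ω(z) ∩ (S \ S₀), then ω(z) cannot be entirely contained in S \ S₀. -/
open Filter intervalIntegral

/-- Zubov–Ura–Kimura-type argument of Proposition 2: if `V` increases on average
(at rate `> β > 0`) along every orbit of the ω-limit set of `z` that lies in `S \ S₀`,
then the ω-limit set of `z` cannot be entirely contained in `S \ S₀`. -/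
theorem omega_limit_meets_extinction_set
    (S : Type*) [MetricSpace S]
    (Φ : ℝ → S → S)
    (hΦcont : Continuous fun p : ℝ × S => Φ p.1 p.2)
    (hΦ0 : ∀ w, Φ 0 w = w)
    (hΦadd : ∀ s t w, Φ (s + t) w = Φ s (Φ t w))
    (S₀ : Set S) (hS₀closed : IsClosed S₀)
    (hS₀inv : ∀ t : ℝ, ∀ w ∈ S₀, Φ t w ∈ S₀)
    (z : S)
    (hcpt : IsCompact (closure ((fun t => Φ t z) '' Set.Ici (0:ℝ))))
    (V : S → ℝ) (hV : ContinuousOn V (S₀ᶜ))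
    (Vdot : S → ℝ)
    (hVdot : ∀ w ∈ S₀ᶜ, ∀ t : ℝ, HasDerivAt (fun s => V (Φ s w)) (Vdot (Φ t w)) t)
    (β : ℝ) (hβ : 0 < β)
    (hincr : ∀ w ∈ (⋂ T : ℝ, closure ((fun t => Φ t z) '' Set.Ici T)) ∩ S₀ᶜ,
      β < limsup (fun s : ℝ => (∫ t in (0:ℝ)..s, Vdot (Φ t w)) / s) atTop) :
    ¬ (⋂ T : ℝ, closure ((fun t => Φ t z) '' Set.Ici T)) ⊆ S₀ᶜ := by
  intro h
  set K : ℝ → Set S := fun T => closure ((fun t => Φ t z) '' Set.Ici T) with hK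
  set ω : Set S := ⋂ T : ℝ, K T with hω
  -- K is antitone
  have hKanti : ∀ T₁ T₂ : ℝ, T₁ ≤ T₂ → K T₂ ⊆ K T₁ := by
    intro T₁ T₂ hT
    exact closure_mono (Set.image_mono (Set.Ici_subset_Ici.mpr hT))
  -- ω is nonempty
  have hωne : ω.Nonempty := by
    have hiter : ω = ⋂ T : ℝ, K (max T 0) := by
      apply subset_antisymm
      · exact Set.subset_iInter fun T => Set.iInter_subset K (max T 0)
      · exact Set.subset_iInter fun T =>
          (Set.iInter_subset (fun T => K (max T 0)) T).trans (hKanti T (max T 0) (le_max_left _ _))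
    rw [hiter]
    apply IsCompact.nonempty_iInter_of_directed_nonempty_isCompact_isClosed
    · intro T₁ T₂
      refine ⟨max T₁ T₂, hKanti _ _ (max_le_max (le_max_left _ _) le_rfl), 
        hKanti _ _ (max_le_max (le_max_right _ _) le_rfl)⟩
    · intro T
      exact ⟨Φ (max T 0) z, subset_closure ⟨max T 0, Set.self_mem_Ici, rfl⟩⟩
    · intro T
      exact hcpt.of_isClosed_subset isClosed_closure (hKanti 0 (max T 0) (le_max_right _ _))
    · intro T; exact isClosed_closure
  -- ω is compact
  have hωcpt : IsCompact ω := by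
    refine hcpt.of_isClosed_subset (isClosed_iInter fun T => isClosed_closure) ?_
    exact Set.iInter_subset K 0
  -- forward invariance of ω
  have hcontΦs : ∀ s : ℝ, Continuous (Φ s) := fun s =>
    hΦcont.comp (continuous_const.prodMk continuous_id)
  have hωinv : ∀ s : ℝ, 0 ≤ s → ∀ w ∈ ω, Φ s w ∈ ω := by
    intro s hs w hw
    refine Set.mem_iInter.mpr fun T => ?_
    have hwT : w ∈ K T := Set.mem_iInter.mp hw T
    have h1 : Φ s w ∈ Φ s '' K T := ⟨w, hwT, rfl⟩
    have h2 : Φ s '' K T ⊆ closure (Φ s '' ((fun t => Φ t z) '' Set.Ici T)) :=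
      image_closure_subset_closure_image (hcontΦs s)
    have h3 : Φ s '' ((fun t => Φ t z) '' Set.Ici T) ⊆ (fun t => Φ t z) '' Set.Ici T := by
      rintro _ ⟨_, ⟨t, ht, rfl⟩, rfl⟩
      refine ⟨s + t, by simp only [Set.mem_Ici] at ht ⊢; linarith, ?_⟩
      simpa using hΦadd s t z
    have h4 : closure (Φ s '' ((fun t => Φ t z) '' Set.Ici T)) ⊆ K T := by
      simp only [hK]; exact closure_mono h3
    exact h4 (h2 h1)
  -- maximizer of V on ω
  obtain ⟨w, hwω, hwmax⟩ := hωcpt.exists_isMaxOn hωne (hV.mono h)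
  have hwS₀ : w ∈ S₀ᶜ := h hwω
  have hlim := hincr w ⟨hwω, hwS₀⟩
  -- the average is nonpositive for s > 0
  have hfle : ∀ s : ℝ, 0 < s → (∫ t in (0:ℝ)..s, Vdot (Φ t w)) / s ≤ 0 := by
    intro s hs
    by_cases hi : IntervalIntegrable (fun t => Vdot (Φ t w)) MeasureTheory.volume 0 s
    · have hftc : (∫ t in (0:ℝ)..s, Vdot (Φ t w)) = V (Φ s w) - V (Φ 0 w) :=
        intervalIntegral.integral_eq_sub_of_hasDerivAt (fun x _ => hVdot w hwS₀ x) hi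
      have hmem : Φ s w ∈ ω := hωinv s hs.le w hwω
      have : V (Φ s w) ≤ V w := hwmax hmem
      rw [hftc, hΦ0]
      apply div_nonpos_of_nonpos_of_nonneg _ hs.le
      linarith
    · rw [intervalIntegral.integral_undef hi]
      simp
  -- hence the limsup is ≤ 0, contradiction
  have hev : ∀ᶠ s : ℝ in atTop, (∫ t in (0:ℝ)..s, Vdot (Φ t w)) / s ≤ 0 :=
    (eventually_gt_atTop 0).mono fun s hs => hfle s hs
  rw [limsup_eq] at hlim
  set A : Set ℝ := {a | ∀ᶠ s : ℝ in atTop, (∫ t in (0:ℝ)..s, Vdot (Φ t w)) / s ≤ a} with hA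
  have h0 : (0:ℝ) ∈ A := hev
  by_cases hbdd : BddBelow A
  · have := csInf_le hbdd h0
    linarith
  · rw [Real.sInf_of_not_bddBelow hbdd] at hlim
    linarith
end
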